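/- arXiv:2105.02181 — 5 statements merged into one kernel-verified Lean document; each statement's English description precedes it below -/
import Mathlib

section
/- For the data of Construction 1, the cover relations 2L_j = Σ_{σ} D_σ hold in ℤ⁵ for every nonzero j ∈ (ℤ/2ℤ)⁴, where the sum runs over all nonzero σ = (σ_1,σ_2,σ_3,σ_4) ∈ (ℤ/2ℤ)⁴ with j_1σ_1 + j_2σ_2 + j_3σ_3 + j_4σ_4 ≡ 1 (mod 2), i.e., over those σ on which the character χ_j takes the value −1. (These are exactly Pardini's conditions 2L_χ ≡ Σ_{χ(σ)=−1} D_σ for the data to define a ℤ_2⁴-cover of Y_4.) -/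
open Finset

namespace DP5

/-- The Picard lattice of the del Pezzo surface `Y₄` of degree 5,
modeled as `ℤ⁵` with basis `l, e₁, e₂, e₃, e₄`. -/
abbrev Pic : Type := Fin 5 → ℤ

def l  : Pic := ![1, 0, 0, 0, 0]
def e1 : Pic := ![0, 1, 0, 0, 0]
def e2 : Pic := ![0, 0, 1, 0, 0]
def e3 : Pic := ![0, 0, 0, 1, 0]
def e4 : Pic := ![0, 0, 0, 0, 1]

/-- The intersection form: `l·l = 1`, `eᵢ·eᵢ = -1`, mixed products `0`. -/
def inter (v w : Pic) : ℤ :=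
  v 0 * w 0 - v 1 * w 1 - v 2 * w 2 - v 3 * w 3 - v 4 * w 4

def f1 : Pic := l - e1
def f2 : Pic := l - e2
def f3 : Pic := l - e3
def f4 : Pic := l - e4

def h12 : Pic := l - e1 - e2
def h13 : Pic := l - e1 - e3
def h14 : Pic := l - e1 - e4
def h23 : Pic := l - e2 - e3
def h24 : Pic := l - e2 - e4
def h34 : Pic := l - e3 - e4

/-- The canonical class `K = -3l + e₁ + e₂ + e₃ + e₄` of `Y₄`. -/
def K : Pic := (-3 : ℤ) • l + e1 + e2 + e3 + e4

/-- Elements/characters of `(ℤ/2ℤ)⁴`, written as bit strings `σ₁σ₂σ₃σ₄`. -/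
abbrev Char4 : Type := Fin 4 → ZMod 2

/-- Construction 1: the branch divisor classes `D_σ`. -/
def D1 (s : Char4) : Pic :=
  if s = ![0,1,0,1] then h14 else
  if s = ![0,1,1,0] then f3 + e1 else
  if s = ![0,1,1,1] then h12 else
  if s = ![1,0,0,1] then f1 + e2 else
  if s = ![1,0,1,0] then h23 else
  if s = ![1,0,1,1] then h24 else
  if s = ![1,1,0,1] then h13 else
  if s = ![1,1,1,0] then h34 else
  if s = ![1,1,1,1] then f2 + e3 else 0

/-- Construction 1: the classes `L_χ`. -/
def L1 (j : Char4) : Pic :=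
  if j = ![0,0,0,1] then (2 : ℤ) • f1 + f2 - e4 else
  if j = ![0,0,1,0] then (2 : ℤ) • f2 + f3 - e4 else
  if j = ![0,1,0,0] then f1 + f2 + f3 - e4 else
  if j = ![1,0,0,0] then f1 + f2 + f3 - e4 else
  if j = ![0,0,1,1] then f1 + (2 : ℤ) • f3 - e4 else
  if j = ![0,1,0,1] then f3 + f4 else
  if j = ![0,1,1,0] then h12 + h34 else
  if j = ![0,1,1,1] then f1 + f2 else
  if j = ![1,0,0,1] then h12 + h34 else
  if j = ![1,0,1,0] then f1 + f3 else
  if j = ![1,0,1,1] then f2 + f4 else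
  if j = ![1,1,0,0] then f1 + f2 + f3 - e4 else
  if j = ![1,1,0,1] then f2 + f3 else
  if j = ![1,1,1,0] then f1 + f4 else
  if j = ![1,1,1,1] then h12 + h34 else 0

/-- Construction 1 satisfies Pardini's cover conditions
`2L_χ ≡ Σ_{χ(σ) = -1} D_σ` for every nontrivial character `χ` of `(ℤ/2ℤ)⁴`. -/
theorem construction1_cover_relations (j : Char4) (hj : j ≠ 0) :
    (2 : ℤ) • L1 j =
      ∑ s ∈ Finset.univ.filter
        (fun s : Char4 => s ≠ 0 ∧ (∑ i : Fin 4, j i * s i) = 1), D1 s := by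
  revert hj; revert j; decide
end DP5
end

section
/- For the data of Construction 1, for every nonzero j ∈ (ℤ/2ℤ)⁴ with j ∉ {1000, 0100, 1100}, the class K + L_j ∈ ℤ⁵ cannot be written as a ℕ-linear (nonnegative integer) combination of the ten classes e_1, e_2, e_3, e_4, h_{12}, h_{13}, h_{14}, h_{23}, h_{24}, h_{34}; that is, K + L_j is not an effective class, encoding h⁰(K_{Y_4} + L_χ) = 0 for all characters χ ∉ {χ_{1000}, χ_{0100}, χ_{1100}}. -/
open Finset

namespace DP5

/-- The ten (−1)-curve classes on `Y₄`, generating the effective cone. -/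
def tenLines : Fin 10 → Pic := ![e1, e2, e3, e4, h12, h13, h14, h23, h24, h34]

/-! A nef class meets every effective class non-negatively. When `L_j` has degree 2, `K + L_j`
has degree `-1`, so it meets the nef class `l` negatively; in the three remaining cases of degree 3,
`K + L_j` is a difference `e_a - e_b` of exceptional classes, which the nef conic class `f_b`
meets negatively. -/

def IsEffective (v : Pic) : Prop :=
  ∃ c : Fin 10 → ℕ, v = ∑ i : Fin 10, (c i : ℤ) • tenLines i

def IsNef (D : Pic) : Prop :=
  ∀ i, 0 ≤ inter D (tenLines i)

lemma inter_add_right (D v w : Pic) : inter D (v + w) = inter D v + inter D w := by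
  simp only [inter, Pi.add_apply]; ring

lemma inter_smul_right (D v : Pic) (a : ℤ) : inter D (a • v) = a * inter D v := by
  simp only [inter, Pi.smul_apply, smul_eq_mul]; ring

lemma inter_sum_right {ι : Type*} (D : Pic) (s : Finset ι) (v : ι → Pic) :
    inter D (∑ i ∈ s, v i) = ∑ i ∈ s, inter D (v i) := by
  classical
  induction s using Finset.induction_on with
  | empty => simp [inter]
  | insert a s ha ih => rw [sum_insert ha, sum_insert ha, inter_add_right, ih]

lemma IsNef.inter_nonneg {D v : Pic} (hD : IsNef D) (hv : IsEffective v) :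
    0 ≤ inter D v := by
  obtain ⟨c, rfl⟩ := hv
  rw [inter_sum_right]
  exact sum_nonneg fun i _ => by
    rw [inter_smul_right]
    exact mul_nonneg (Int.natCast_nonneg _) (hD i)

lemma isNef_of_mem {D : Pic} (hD : D ∈ [l, f1, f2, f3]) : IsNef D := by
  revert D
  unfold IsNef
  decide

lemma exists_isNef_inter_K_add_L1_neg (j : Char4) (hj : j ≠ 0)
    (hj' : j ∉ ([![1,0,0,0], ![0,1,0,0], ![1,1,0,0]] : List Char4)) :
    ∃ D ∈ [l, f1, f2, f3], inter D (K + L1 j) < 0 := by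
  revert j
  decide

/-- Construction 1: for every nontrivial character `χ ∉ {χ_1000, χ_0100, χ_1100}`
the class `K + L_χ` is not an ℕ-combination of the ten (−1)-curve classes,
i.e. it is not effective (so `h⁰(K + L_χ) = 0`). -/
theorem construction1_KL_not_effective (j : Char4) (hj : j ≠ 0)
    (hj' : j ∉ ([![1,0,0,0], ![0,1,0,0], ![1,1,0,0]] : List Char4)) :
    ¬ ∃ c : Fin 10 → ℕ, K + L1 j = ∑ i : Fin 10, (c i : ℤ) • tenLines i := by
  intro hKL
  obtain ⟨D, hD, hneg⟩ := exists_isNef_inter_K_add_L1_neg j hj hj'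
  exact hneg.not_ge ((isNef_of_mem hD).inter_nonneg hKL)
end DP5
end

section
/- For the data of Construction 1, the sum over all fifteen nonzero j ∈ (ℤ/2ℤ)⁴ of the intersection numbers L_j·(L_j + K) equals −24; consequently, by the formula χ(O_X) = 16·χ(O_{Y_4}) + (1/2)·Σ_{χ ≠ 1} L_χ·(L_χ + K_{Y_4}) with χ(O_{Y_4}) = 1, the covering surface X has χ(O_X) = 16 + (1/2)(−24) = 4. -/
open Finset

namespace DP5

/-- Construction 1: `Σ_{χ ≠ 1} L_χ·(L_χ + K) = -24`, hence
`χ(O_X) = 16·χ(O_{Y₄}) + (1/2)·(-24) = 4`. -/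
theorem construction1_chi :
    (∑ j ∈ Finset.univ.filter (fun j : Char4 => j ≠ 0),
        inter (L1 j) (L1 j + K)) = -24 ∧
    (16 : ℤ) * 1 + (∑ j ∈ Finset.univ.filter (fun j : Char4 => j ≠ 0),
        inter (L1 j) (L1 j + K)) / 2 = 4 := by
  have h : (∑ j ∈ Finset.univ.filter (fun j : Char4 => j ≠ 0),
      inter (L1 j) (L1 j + K)) = -24 := by
    rw [show (0 : Char4) = ![0,0,0,0] by ext i; fin_cases i <;> rfl]
    decide
  exact ⟨h, by rw [h]; norm_num⟩
end DP5
end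

section
/- For the data of Construction 2, the cover relations 2L_j = Σ_{σ} D_σ hold in ℤ⁵ for every nonzero j ∈ (ℤ/2ℤ)⁴, where the sum runs over all nonzero σ = (σ_1,σ_2,σ_3,σ_4) ∈ (ℤ/2ℤ)⁴ with j_1σ_1 + j_2σ_2 + j_3σ_3 + j_4σ_4 ≡ 1 (mod 2), i.e., over those σ on which the character χ_j takes the value −1. (These are exactly Pardini's conditions 2L_χ ≡ Σ_{χ(σ)=−1} D_σ for the data to define a ℤ_2⁴-cover of Y_4.) -/
open Finset

namespace DP5

/-- Construction 2: the branch divisor classes `D_σ`. -/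
def D2 (s : Char4) : Pic :=
  if s = ![0,0,1,1] then e4 else
  if s = ![0,1,0,1] then h14 else
  if s = ![0,1,1,0] then f2 else
  if s = ![0,1,1,1] then f3 else
  if s = ![1,0,0,0] then e2 else
  if s = ![1,0,0,1] then h23 else
  if s = ![1,0,1,0] then h24 else
  if s = ![1,0,1,1] then f1 else
  if s = ![1,1,0,0] then h34 else
  if s = ![1,1,0,1] then h12 + h13 else
  if s = ![1,1,1,0] then e1 else
  if s = ![1,1,1,1] then e3 else 0

/-- Construction 2: the classes `L_χ`. -/
def L2 (j : Char4) : Pic :=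
  if j = ![0,0,0,1] then (2 : ℤ) • f1 + f2 - e3 else
  if j = ![0,0,1,0] then f2 + l else
  if j = ![0,1,0,0] then f1 + f2 + f3 - e4 else
  if j = ![1,0,0,0] then f1 + f2 + f3 - e4 else
  if j = ![0,0,1,1] then f1 + (2 : ℤ) • f2 - e3 - e4 else
  if j = ![0,1,0,1] then f2 + f3 else
  if j = ![0,1,1,0] then (2 : ℤ) • f1 + f2 - e3 - e4 else
  if j = ![0,1,1,1] then f2 + f3 - e4 else
  if j = ![1,0,0,1] then f3 + f4 else
  if j = ![1,0,1,0] then f1 + f2 + f3 - e3 else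
  if j = ![1,0,1,1] then f1 + f4 else
  if j = ![1,1,0,0] then f1 + f2 + f3 - e4 else
  if j = ![1,1,0,1] then f1 + f2 else
  if j = ![1,1,1,0] then l else
  if j = ![1,1,1,1] then f1 + f3 else 0

/-- Construction 2 satisfies Pardini's cover conditions
`2L_χ ≡ Σ_{χ(σ) = -1} D_σ` for every nontrivial character `χ` of `(ℤ/2ℤ)⁴`. -/
theorem construction2_cover_relations (j : Char4) (hj : j ≠ 0) :
    (2 : ℤ) • L2 j =
      ∑ s ∈ Finset.univ.filter
        (fun s : Char4 => s ≠ 0 ∧ (∑ i : Fin 4, j i * s i) = 1), D2 s := by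
  have aux : ∀ j : Char4, j ≠ 0 → ∀ i : Fin 5,
      ((2 : ℤ) • L2 j) i =
      (∑ s ∈ Finset.univ.filter
        (fun s : Char4 => s ≠ 0 ∧ (∑ i : Fin 4, j i * s i) = 1), D2 s) i := by
    decide
  funext i
  exact aux j hj i
end DP5
end

section
/- For the data of Construction 2, the total branch class satisfies Σ_{σ ≠ 0} D_σ = −3K + e_4 in ℤ⁵; consequently the class 2K + Σ_{σ ≠ 0} D_σ (representing 2K_X up to pull-back) equals e_4 − K = 3l − e_1 − e_2 − e_3, its self-intersection is (2K + Σ_{σ≠0} D_σ)·(2K + Σ_{σ≠0} D_σ) = 6, and hence 4·(2K + Σ_{σ≠0} D_σ)² = 24 (the value of K_X² for the covering surface X). -/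
open Finset

namespace DP5

/-- Construction 2: the total branch class `B = Σ_{σ ≠ 0} D_σ`. -/
def B2 : Pic := ∑ s ∈ Finset.univ.filter (fun s : Char4 => s ≠ 0), D2 s

/-! The twelve nonzero branch classes are the four exceptional curves, the pencils `f₁, f₂, f₃`
and the six lines `hᵢⱼ` (`D₁₁₀₁ = h₁₂ + h₁₃` supplying two of them), which add up to
`9l - 3(e₁ + e₂ + e₃) - 2e₄ = -3K + e₄`. Hence `2K + B = e₄ - K = 3l - e₁ - e₂ - e₃`,
the class of cubics through three of the points, of square `9 - 3 = 6`. -/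

theorem B2_eq_sum_components :
    B2 = (e1 + e2 + e3 + e4) + (f1 + f2 + f3) + (h12 + h13 + h14 + h23 + h24 + h34) := by
  decide

theorem B2_eq_neg_three_smul_K_add_e4 : B2 = -((3 : ℤ) • K) + e4 := by
  rw [B2_eq_sum_components]
  simp only [K, f1, f2, f3, h12, h13, h14, h23, h24, h34]
  module

theorem e4_sub_K : e4 - K = (3 : ℤ) • l - e1 - e2 - e3 := by
  simp only [K]
  module

theorem inter_self_three_smul_l_sub_e1_sub_e2_sub_e3 :
    inter ((3 : ℤ) • l - e1 - e2 - e3) ((3 : ℤ) • l - e1 - e2 - e3) = 6 := by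
  decide

/-- Construction 2: the total branch class is `-3K + e₄`, hence
`2K + B = e₄ - K = 3l - e₁ - e₂ - e₃`, with self-intersection `6`,
so that `K_X² = 4 · 6 = 24`. -/
theorem construction2_KX_squared :
    B2 = -((3 : ℤ) • K) + e4 ∧
    (2 : ℤ) • K + B2 = e4 - K ∧
    (2 : ℤ) • K + B2 = (3 : ℤ) • l - e1 - e2 - e3 ∧
    inter ((2 : ℤ) • K + B2) ((2 : ℤ) • K + B2) = 6 ∧
    4 * inter ((2 : ℤ) • K + B2) ((2 : ℤ) • K + B2) = 24 := by
  have hB := B2_eq_neg_three_smul_K_add_e4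
  have hKX : (2 : ℤ) • K + B2 = e4 - K := by
    rw [hB]
    module
  have hKX' : (2 : ℤ) • K + B2 = (3 : ℤ) • l - e1 - e2 - e3 := hKX.trans e4_sub_K
  have hsq : inter ((2 : ℤ) • K + B2) ((2 : ℤ) • K + B2) = 6 := by
    rw [hKX']
    exact inter_self_three_smul_l_sub_e1_sub_e2_sub_e3
  exact ⟨hB, hKX, hKX', hsq, by rw [hsq]; norm_num⟩

end DP5
end
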